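/- ∑_{j=0}^∞ binom(1/2, j)^2 = 4/π, where binom(1/2, j) = (1/2)(1/2 - 1)⋯(1/2 - j + 1)/j! is the generalized binomial coefficient. -/

import Mathlib

/-!
With `q n = ∏_{i<n} (2i+1)/(2i+2)` (that is, `C(2n, n) / 4ⁿ`) one has
`binom(1/2, n+1) = (-1)ⁿ q (n+1) / (2n+1)`, and the partial sums telescope:
`∑_{j ≤ N} binom(1/2, j)² = (4N+1) q N²`. The quantity `(2N+1) q N²` is the reciprocal of the
`N`-th partial Wallis product, so it tends to `2/π`, and the partial sums tend to `4/π`.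
-/

open scoped Real

/-- The generalized binomial coefficient `r(r-1)⋯(r-j+1)/j!`. -/
noncomputable def gbinom (r : ℝ) (j : ℕ) : ℝ :=
  (∏ k ∈ Finset.range j, (r - k)) / (Nat.factorial j)

open Filter Finset Topology

noncomputable def oddEvenRatio (n : ℕ) : ℝ := ∏ i ∈ range n, (2 * (i : ℝ) + 1) / (2 * i + 2)

lemma oddEvenRatio_succ (n : ℕ) :
    oddEvenRatio (n + 1) = oddEvenRatio n * ((2 * n + 1) / (2 * n + 2)) :=
  prod_range_succ _ _

lemma gbinom_succ (r : ℝ) (j : ℕ) : gbinom r (j + 1) = gbinom r j * ((r - j) / (j + 1)) := by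
  rw [gbinom, gbinom, prod_range_succ, Nat.factorial_succ]
  push_cast
  rw [div_mul_div_comm, mul_comm ((j : ℝ) + 1)]

lemma gbinom_half_succ (n : ℕ) :
    gbinom (1 / 2) (n + 1) = (-1) ^ n * oddEvenRatio (n + 1) / (2 * n + 1) := by
  induction n with
  | zero => simp [gbinom, oddEvenRatio]
  | succ n ih =>
    rw [gbinom_succ, ih, oddEvenRatio_succ (n + 1)]
    push_cast
    field_simp
    ring

lemma gbinom_half_succ_sq (n : ℕ) :
    gbinom (1 / 2) (n + 1) ^ 2 = oddEvenRatio (n + 1) ^ 2 / (2 * n + 1) ^ 2 := by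
  rw [gbinom_half_succ, div_pow, mul_pow, ← pow_mul, mul_comm n, pow_mul, neg_one_sq, one_pow,
    one_mul]

lemma sum_range_succ_gbinom_half_sq (N : ℕ) :
    ∑ j ∈ range (N + 1), gbinom (1 / 2) j ^ 2 = (4 * N + 1) * oddEvenRatio N ^ 2 := by
  induction N with
  | zero => simp [gbinom, oddEvenRatio]
  | succ N ih =>
    rw [sum_range_succ, ih, gbinom_half_succ_sq, oddEvenRatio_succ]
    push_cast
    field_simp
    ring

lemma Real.Wallis.W_mul_oddEvenRatio_sq (n : ℕ) :
    Real.Wallis.W n * ((2 * n + 1) * oddEvenRatio n ^ 2) = 1 := by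
  induction n with
  | zero => simp [Real.Wallis.W, oddEvenRatio]
  | succ n ih =>
    rw [Real.Wallis.W_succ, oddEvenRatio_succ]
    push_cast
    field_simp
    linear_combination (2 * (n : ℝ) + 3) * ih

lemma tendsto_two_mul_add_one_mul_oddEvenRatio_sq :
    Tendsto (fun n : ℕ ↦ (2 * n + 1) * oddEvenRatio n ^ 2) atTop (𝓝 (2 / π)) := by
  have hW := Real.Wallis.tendsto_W_nhds_pi_div_two.inv₀ (by positivity)
  rw [inv_div] at hW
  exact hW.congr fun n ↦ inv_eq_of_mul_eq_one_right (Real.Wallis.W_mul_oddEvenRatio_sq n)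

lemma hasSum_gbinom_half_sq : HasSum (fun j ↦ gbinom (1 / 2) j ^ 2) (4 / π) := by
  rw [hasSum_iff_tendsto_nat_of_nonneg fun j ↦ sq_nonneg _, ← tendsto_add_atTop_iff_nat 1]
  set a : ℕ → ℝ := fun n ↦ (2 * n + 1) * oddEvenRatio n ^ 2
  have ha : Tendsto a atTop (𝓝 (2 / π)) := tendsto_two_mul_add_one_mul_oddEvenRatio_sq
  have hlim : Tendsto (fun n : ℕ ↦ 2 * a n - a n / (2 * n + 1)) atTop (𝓝 (2 * (2 / π) - 0)) :=
    (ha.const_mul 2).sub <| ha.div_atTop <|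
      tendsto_atTop_add_const_right _ _ <| tendsto_natCast_atTop_atTop.const_mul_atTop two_pos
  rw [show 2 * (2 / π) - 0 = 4 / π by ring] at hlim
  refine hlim.congr fun n ↦ ?_
  rw [sum_range_succ_gbinom_half_sq]
  field_simp
  ring

theorem stmt4 : (∑' j : ℕ, gbinom (1/2) j ^ 2) = 4 / π :=
  hasSum_gbinom_half_sq.tsum_eq
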